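/- For an exchangeable bivariate Gaussian mixture in which component m has strictly largest variance, the correlation curve ρ(y) = σβ(y)/[(σβ(y))² + σ²(y)]^{1/2} converges as y → ±∞ to ρ̃_m = σρ_m/[σ²ρ_m² + σ_m²(1 − ρ_m²)]^{1/2}, where σ² is the marginal variance of the mixture. -/

import Mathlib

open scoped Real BigOperators
open Filter

/-- Univariate Gaussian density. -/
noncomputable def phi1 (μ σ y : ℝ) : ℝ :=
  (Real.sqrt (2 * Real.pi * σ ^ 2))⁻¹ * Real.exp (-(y - μ) ^ 2 / (2 * σ ^ 2))

/-- Posterior component probability given Y₂ = y. -/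
noncomputable def pstar (m : ℕ) (p μ σ : Fin m → ℝ) (k : Fin m) (y : ℝ) : ℝ :=
  p k * phi1 (μ k) (σ k) y / ∑ j, p j * phi1 (μ j) (σ j) y

/-- Componentwise conditional mean line. -/
noncomputable def muk (m : ℕ) (μ ρ : Fin m → ℝ) (k : Fin m) (y : ℝ) : ℝ :=
  μ k + ρ k * (y - μ k)

/-- Conditional mean of the mixture. -/
noncomputable def mucond (m : ℕ) (p μ σ ρ : Fin m → ℝ) (y : ℝ) : ℝ :=
  ∑ k, pstar m p μ σ k y * muk m μ ρ k y

/-- Regression slope β(y) = μ'(y). -/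
noncomputable def beta (m : ℕ) (p μ σ ρ : Fin m → ℝ) (y : ℝ) : ℝ :=
  ∑ k, pstar m p μ σ k y *
    (ρ k + (muk m μ ρ k y - mucond m p μ σ ρ y) * (-(y - μ k) / σ k ^ 2))

/-- Conditional variance σ²(y) of the mixture. -/
noncomputable def sig2cond (m : ℕ) (p μ σ ρ : Fin m → ℝ) (y : ℝ) : ℝ :=
  ∑ k, pstar m p μ σ k y *
    (σ k ^ 2 * (1 - ρ k ^ 2) + (muk m μ ρ k y - mucond m p μ σ ρ y) ^ 2)

/-- The Bjerve–Doksum correlation curve of the mixture, with τ₂ equal to the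
marginal standard deviation σ of the mixture. -/
noncomputable def corrCurve (m : ℕ) (p μ σ ρ : Fin m → ℝ) (y : ℝ) : ℝ :=
  let σglob := Real.sqrt (∑ k, p k * (σ k ^ 2 + (μ k - ∑ j, p j * μ j) ^ 2))
  σglob * beta m p μ σ ρ y /
    Real.sqrt ((σglob * beta m p μ σ ρ y) ^ 2 + sig2cond m p μ σ ρ y)

/-! If `σ_k < σ_m`, the density ratio `φ_k / φ_m` is a constant times `exp (a y² + b y)` with
`a < 0`, so each posterior weight `p*_k(y)`, `k ≠ m`, decays faster than any power of `y` as
`|y| → ∞` (along `cocompact ℝ`). Since the weights sum to one, a posterior average of functions of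
polynomial growth differs from its `m`-th function by a superpolynomially small term. Applied to the
regression lines this shows that `μ(y)` approaches the `m`-th line; applied to the summands of `β`
and `σ²` it shows `β(y) → ρ_m` and `σ²(y) → σ_m² (1 - ρ_m²)`, and the correlation curve is
continuous in `(β, σ²)` since the limiting conditional variance is positive. -/

open Asymptotics

theorem superpolynomialDecay_exp_quadratic {a : ℝ} (ha : a < 0) (b : ℝ) :
    SuperpolynomialDecay (cocompact ℝ) id fun y => Real.exp (a * y ^ 2 + b * y) := by
  rw [superpolynomialDecay_iff_superpolynomialDecay_abs]
  refine (superpolynomialDecay_iff_isLittleO _ tendsto_norm_cocompact_atTop).2 fun z => ?_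
  have := (cexp_neg_quadratic_isLittleO_abs_rpow_cocompact (a := a) (by simpa using ha) b z)
  simpa [Complex.norm_exp, Real.rpow_intCast, ← Complex.ofReal_pow] using this.norm_left

theorem Asymptotics.SuperpolynomialDecay.mul_isBigO {α : Type*} {l : Filter α} {k f g : α → ℝ}
    {N : ℕ} (hf : SuperpolynomialDecay l k f) (hg : g =O[l] fun x => k x ^ N) :
    SuperpolynomialDecay l k (f * g) := fun n =>
  (((isBigO_refl (fun x => k x ^ n * f x) l).mul hg).congr_left fun x => by
    simp [mul_assoc]).trans_tendsto (by simpa [mul_assoc] using hf.mul_param_pow N n)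

theorem Asymptotics.superpolynomialDecay_sum {α ι : Type*} {l : Filter α} {k : α → ℝ}
    (s : Finset ι) {f : ι → α → ℝ} (hf : ∀ i ∈ s, SuperpolynomialDecay l k (f i)) :
    SuperpolynomialDecay l k fun x => ∑ i ∈ s, f i x := fun n => by
  simpa [Finset.mul_sum] using tendsto_finsetSum s fun i hi => hf i hi n

theorem Asymptotics.SuperpolynomialDecay.tendsto_zero {α : Type*} {l : Filter α} {k f : α → ℝ}
    (hf : SuperpolynomialDecay l k f) : Tendsto f l (nhds 0) := by
  simpa using hf 0

theorem isBigO_const_pow_cocompact (c : ℝ) (N : ℕ) :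
    (fun _ : ℝ => c) =O[cocompact ℝ] fun y => y ^ N :=
  (isBigO_const_one ℝ c (cocompact ℝ)).trans <| IsBigO.of_bound 1 <|
    (tendsto_norm_cocompact_atTop.eventually_ge_atTop 1).mono fun y hy => by
      simpa using one_le_pow₀ (M₀ := ℝ) (n := N) hy

theorem isBigO_affine_cocompact (c₀ c₁ : ℝ) :
    (fun y : ℝ => c₀ + c₁ * y) =O[cocompact ℝ] fun y => y ^ 1 :=
  (isBigO_const_pow_cocompact c₀ 1).add ((isBigO_refl _ _).const_mul_left c₁ |>.congr_right
    fun y => (pow_one y).symm)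

theorem Asymptotics.SuperpolynomialDecay.isBigO_pow_cocompact {f : ℝ → ℝ}
    (hf : SuperpolynomialDecay (cocompact ℝ) id f) (N : ℕ) : f =O[cocompact ℝ] fun y => y ^ N :=
  (hf.tendsto_zero.isBigO_one ℝ).trans (isBigO_const_pow_cocompact 1 N)

theorem superpolynomialDecay_sum_mul_sub {α ι : Type*} [Fintype ι]
    {l : Filter α} {k : α → ℝ} {w g : ι → α → ℝ} {i : ι} {N : ℕ}
    (hw : ∀ x, ∑ j, w j x = 1) (hdec : ∀ j ≠ i, SuperpolynomialDecay l k (w j))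
    (hg : ∀ j, g j =O[l] fun x => k x ^ N) :
    SuperpolynomialDecay l k fun x => ∑ j, w j x * g j x - g i x := by
  have hsplit : ∀ x, ∑ j, w j x * (g j x - g i x) = ∑ j, w j x * g j x - g i x := fun x => by
    simp only [mul_sub, Finset.sum_sub_distrib, ← Finset.sum_mul, hw, one_mul]
  refine (superpolynomialDecay_sum Finset.univ fun j _ => ?_).congr hsplit
  by_cases hj : j = i
  · subst hj
    exact (superpolynomialDecay_zero l k).congr fun x => by simp
  · exact (hdec j hj).mul_isBigO ((hg j).sub (hg i))

theorem phi1_pos (μ : ℝ) {σ : ℝ} (hσ : σ ≠ 0) (y : ℝ) : 0 < phi1 μ σ y := by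
  unfold phi1
  positivity

theorem superpolynomialDecay_phi1_div_phi1 {μ₁ μ₂ σ₁ σ₂ : ℝ} (hσ₁ : 0 < σ₁) (h₁₂ : σ₁ < σ₂) :
    SuperpolynomialDecay (cocompact ℝ) id fun y => phi1 μ₁ σ₁ y / phi1 μ₂ σ₂ y := by
  have hσ₂ : 0 < σ₂ := hσ₁.trans h₁₂
  have ha : 1 / (2 * σ₂ ^ 2) - 1 / (2 * σ₁ ^ 2) < 0 := by
    have : σ₁ ^ 2 < σ₂ ^ 2 := by gcongr
    have : 1 / (2 * σ₂ ^ 2) < 1 / (2 * σ₁ ^ 2) := by gcongr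
    linarith
  set C := Real.sqrt (2 * π * σ₂ ^ 2) / Real.sqrt (2 * π * σ₁ ^ 2) *
    Real.exp (μ₂ ^ 2 / (2 * σ₂ ^ 2) - μ₁ ^ 2 / (2 * σ₁ ^ 2))
  refine ((superpolynomialDecay_exp_quadratic ha (μ₁ / σ₁ ^ 2 - μ₂ / σ₂ ^ 2)).const_mul C).congr
    fun y => ?_
  have hexp : Real.exp (-(y - μ₁) ^ 2 / (2 * σ₁ ^ 2)) / Real.exp (-(y - μ₂) ^ 2 / (2 * σ₂ ^ 2)) =
      Real.exp ((1 / (2 * σ₂ ^ 2) - 1 / (2 * σ₁ ^ 2)) * y ^ 2 + (μ₁ / σ₁ ^ 2 - μ₂ / σ₂ ^ 2) * y) *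
        Real.exp (μ₂ ^ 2 / (2 * σ₂ ^ 2) - μ₁ ^ 2 / (2 * σ₁ ^ 2)) := by
    rw [← Real.exp_sub, ← Real.exp_add]
    congr 1
    field_simp
    ring
  have hs₁ : 0 < Real.sqrt (2 * π * σ₁ ^ 2) := by positivity
  have hs₂ : 0 < Real.sqrt (2 * π * σ₂ ^ 2) := by positivity
  simp only [phi1, C]
  rw [mul_div_mul_comm, hexp]
  field_simp

variable {m : ℕ} {p μ σ ρ : Fin m → ℝ}

theorem sum_pstar [NeZero m] (hp : ∀ k, 0 < p k) (hσ : ∀ k, σ k ≠ 0) (y : ℝ) :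
    ∑ k, pstar m p μ σ k y = 1 := by
  have hS : 0 < ∑ j, p j * phi1 (μ j) (σ j) y :=
    Finset.sum_pos (fun j _ => mul_pos (hp j) (phi1_pos _ (hσ j) y)) Finset.univ_nonempty
  simp only [pstar, ← Finset.sum_div, div_self hS.ne']

theorem superpolynomialDecay_pstar (hp : ∀ k, 0 < p k) (hσ : ∀ k, 0 < σ k) {i k : Fin m}
    (hki : σ k < σ i) : SuperpolynomialDecay (cocompact ℝ) id (pstar m p μ σ k) := by
  refine ((superpolynomialDecay_phi1_div_phi1 (μ₁ := μ k) (μ₂ := μ i) (hσ k) hki).const_mul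
    (p k / p i)).trans_abs_le fun y => ?_
  have hterm : ∀ j, 0 < p j * phi1 (μ j) (σ j) y := fun j =>
    mul_pos (hp j) (phi1_pos _ (hσ j).ne' y)
  have hle : p i * phi1 (μ i) (σ i) y ≤ ∑ j, p j * phi1 (μ j) (σ j) y :=
    Finset.single_le_sum (fun j _ => (hterm j).le) (Finset.mem_univ i)
  rw [pstar, abs_of_nonneg (div_nonneg (hterm k).le ((hterm i).le.trans hle)),
    ← mul_div_mul_comm, abs_of_nonneg (div_nonneg (hterm k).le (hterm i).le)]
  exact div_le_div_of_nonneg_left (hterm k).le (hterm i) hle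

theorem isBigO_muk (k : Fin m) : muk m μ ρ k =O[cocompact ℝ] fun y => y ^ 1 :=
  (isBigO_affine_cocompact (μ k - ρ k * μ k) (ρ k)).congr_left fun y => by unfold muk; ring

theorem superpolynomialDecay_sum_pstar_mul_sub (hp : ∀ k, 0 < p k) (hσ : ∀ k, 0 < σ k)
    {i : Fin m} (hdom : ∀ k ≠ i, σ k < σ i) {g : Fin m → ℝ → ℝ} {N : ℕ}
    (hg : ∀ k, g k =O[cocompact ℝ] fun y => y ^ N) :
    SuperpolynomialDecay (cocompact ℝ) id fun y => ∑ k, pstar m p μ σ k y * g k y - g i y :=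
  have : NeZero m := NeZero.of_pos i.pos
  superpolynomialDecay_sum_mul_sub (sum_pstar hp fun k => (hσ k).ne')
    (fun k hk => superpolynomialDecay_pstar hp hσ (hdom k hk)) hg

theorem superpolynomialDecay_mucond_sub_muk (hp : ∀ k, 0 < p k) (hσ : ∀ k, 0 < σ k)
    {i : Fin m} (hdom : ∀ k ≠ i, σ k < σ i) :
    SuperpolynomialDecay (cocompact ℝ) id fun y => mucond m p μ σ ρ y - muk m μ ρ i y :=
  superpolynomialDecay_sum_pstar_mul_sub hp hσ hdom isBigO_muk

theorem isBigO_muk_sub_mucond (hp : ∀ k, 0 < p k) (hσ : ∀ k, 0 < σ k)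
    {i : Fin m} (hdom : ∀ k ≠ i, σ k < σ i) (k : Fin m) :
    (fun y => muk m μ ρ k y - mucond m p μ σ ρ y) =O[cocompact ℝ] fun y => y ^ 1 :=
  ((isBigO_muk k).sub ((isBigO_muk i).add
    ((superpolynomialDecay_mucond_sub_muk (ρ := ρ) hp hσ hdom).isBigO_pow_cocompact 1))).congr_left
    fun y => by ring

theorem tendsto_beta (hp : ∀ k, 0 < p k) (hσ : ∀ k, 0 < σ k)
    {i : Fin m} (hdom : ∀ k ≠ i, σ k < σ i) :
    Tendsto (beta m p μ σ ρ) (cocompact ℝ) (nhds (ρ i)) := by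
  have hslope : ∀ k, (fun y => -(y - μ k) / σ k ^ 2) =O[cocompact ℝ] fun y => y ^ 1 := fun k =>
    (isBigO_affine_cocompact (μ k / σ k ^ 2) (-1 / σ k ^ 2)).congr_left fun y => by ring
  have hconc := superpolynomialDecay_sum_pstar_mul_sub (μ := μ) hp hσ hdom (N := 2)
    (g := fun k y => ρ k + (muk m μ ρ k y - mucond m p μ σ ρ y) * (-(y - μ k) / σ k ^ 2))
    fun k => (isBigO_const_pow_cocompact (ρ k) 2).add <|
      ((isBigO_muk_sub_mucond hp hσ hdom k).mul (hslope k)).congr_right fun y => by ring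
  have hlast : SuperpolynomialDecay (cocompact ℝ) id fun y =>
      (muk m μ ρ i y - mucond m p μ σ ρ y) * (-(y - μ i) / σ i ^ 2) :=
    ((superpolynomialDecay_mucond_sub_muk hp hσ hdom).mul_isBigO (hslope i).neg_left).congr
      fun y => by simp only [Pi.mul_apply]; ring
  refine tendsto_sub_nhds_zero_iff.1 ((hconc.add hlast).tendsto_zero.congr fun y => ?_)
  simp only [Pi.add_apply, beta]
  ring

theorem tendsto_sig2cond (hp : ∀ k, 0 < p k) (hσ : ∀ k, 0 < σ k)
    {i : Fin m} (hdom : ∀ k ≠ i, σ k < σ i) :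
    Tendsto (sig2cond m p μ σ ρ) (cocompact ℝ) (nhds (σ i ^ 2 * (1 - ρ i ^ 2))) := by
  have hconc := superpolynomialDecay_sum_pstar_mul_sub (μ := μ) hp hσ hdom (N := 2)
    (g := fun k y => σ k ^ 2 * (1 - ρ k ^ 2) + (muk m μ ρ k y - mucond m p μ σ ρ y) ^ 2)
    fun k => (isBigO_const_pow_cocompact _ 2).add <|
      ((isBigO_muk_sub_mucond hp hσ hdom k).pow 2).congr_right fun y => by ring
  have hD := superpolynomialDecay_mucond_sub_muk (μ := μ) (ρ := ρ) hp hσ hdom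
  refine tendsto_sub_nhds_zero_iff.1 ((hconc.add (hD.mul hD)).tendsto_zero.congr fun y => ?_)
  simp only [Pi.add_apply, Pi.mul_apply, sig2cond]
  ring

def mixtureVariance (m : ℕ) (p μ σ : Fin m → ℝ) : ℝ :=
  ∑ k, p k * (σ k ^ 2 + (μ k - ∑ j, p j * μ j) ^ 2)

theorem mixtureVariance_nonneg (hp : ∀ k, 0 ≤ p k) : 0 ≤ mixtureVariance m p μ σ :=
  Finset.sum_nonneg fun k _ => mul_nonneg (hp k) (by positivity)

theorem tendsto_corrCurve {l : Filter ℝ} {r v : ℝ} (hp : ∀ k, 0 ≤ p k)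
    (hβ : Tendsto (beta m p μ σ ρ) l (nhds r)) (hs : Tendsto (sig2cond m p μ σ ρ) l (nhds v))
    (hv : 0 < v) :
    Tendsto (corrCurve m p μ σ ρ) l
      (nhds (Real.sqrt (mixtureVariance m p μ σ) * r /
        Real.sqrt (mixtureVariance m p μ σ * r ^ 2 + v))) := by
  have hS := mixtureVariance_nonneg (μ := μ) (σ := σ) hp
  have hnum := hβ.const_mul (Real.sqrt (mixtureVariance m p μ σ))
  have hden := ((hnum.pow 2).add hs).sqrt
  rw [mul_pow, Real.sq_sqrt hS] at hden
  exact hnum.div hden (Real.sqrt_ne_zero'.2 (by positivity))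

theorem correlation_curve_limit_dominant_component_general
    (m : ℕ) (p μ σ ρ : Fin (m + 1) → ℝ)
    (hp : ∀ k, 0 < p k) (hσ : ∀ k, 0 < σ k)
    (hρ : ∀ k, ρ k ∈ Set.Ioo (-1 : ℝ) 1)
    (hdom : ∀ k, k ≠ Fin.last m → σ k < σ (Fin.last m)) :
    Tendsto (corrCurve (m + 1) p μ σ ρ) atTop
      (nhds (Real.sqrt (∑ k, p k * (σ k ^ 2 + (μ k - ∑ j, p j * μ j) ^ 2)) *
          ρ (Fin.last m) /
        Real.sqrt ((∑ k, p k * (σ k ^ 2 + (μ k - ∑ j, p j * μ j) ^ 2)) *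
            ρ (Fin.last m) ^ 2 +
          σ (Fin.last m) ^ 2 * (1 - ρ (Fin.last m) ^ 2)))) ∧
    Tendsto (corrCurve (m + 1) p μ σ ρ) atBot
      (nhds (Real.sqrt (∑ k, p k * (σ k ^ 2 + (μ k - ∑ j, p j * μ j) ^ 2)) *
          ρ (Fin.last m) /
        Real.sqrt ((∑ k, p k * (σ k ^ 2 + (μ k - ∑ j, p j * μ j) ^ 2)) *
            ρ (Fin.last m) ^ 2 +
          σ (Fin.last m) ^ 2 * (1 - ρ (Fin.last m) ^ 2)))) := by
  have hv : 0 < σ (Fin.last m) ^ 2 * (1 - ρ (Fin.last m) ^ 2) :=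
    mul_pos (pow_pos (hσ _) 2) (sub_pos.2 (sq_lt_one_iff_abs_lt_one _ |>.2 (abs_lt.2 (hρ _))))
  have h := tendsto_corrCurve (μ := μ) (fun k => (hp k).le) (tendsto_beta hp hσ hdom)
    (tendsto_sig2cond hp hσ hdom) hv
  exact ⟨h.mono_left atTop_le_cocompact, h.mono_left atBot_le_cocompact⟩

/-- If the last mixture component strictly dominates in variance, the correlation
curve ρ(y) converges in both tails to ρ̃_m = σρ_m/√(σ²ρ_m² + σ_m²(1-ρ_m²)), where σ²
is the marginal variance of the mixture. -/
theorem correlation_curve_limit_dominant_component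
    (m : ℕ) (p μ σ ρ : Fin (m + 1) → ℝ)
    (hp : ∀ k, 0 < p k) (hpsum : ∑ k, p k = 1) (hσ : ∀ k, 0 < σ k)
    (hρ : ∀ k, ρ k ∈ Set.Ioo (-1 : ℝ) 1)
    (hdom : ∀ k, k ≠ Fin.last m → σ k < σ (Fin.last m)) :
    Tendsto (corrCurve (m + 1) p μ σ ρ) atTop
      (nhds (Real.sqrt (∑ k, p k * (σ k ^ 2 + (μ k - ∑ j, p j * μ j) ^ 2)) *
          ρ (Fin.last m) /
        Real.sqrt ((∑ k, p k * (σ k ^ 2 + (μ k - ∑ j, p j * μ j) ^ 2)) *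
            ρ (Fin.last m) ^ 2 +
          σ (Fin.last m) ^ 2 * (1 - ρ (Fin.last m) ^ 2)))) ∧
    Tendsto (corrCurve (m + 1) p μ σ ρ) atBot
      (nhds (Real.sqrt (∑ k, p k * (σ k ^ 2 + (μ k - ∑ j, p j * μ j) ^ 2)) *
          ρ (Fin.last m) /
        Real.sqrt ((∑ k, p k * (σ k ^ 2 + (μ k - ∑ j, p j * μ j) ^ 2)) *
            ρ (Fin.last m) ^ 2 +
          σ (Fin.last m) ^ 2 * (1 - ρ (Fin.last m) ^ 2)))) :=
  correlation_curve_limit_dominant_component_general m p μ σ ρ hp hσ hρ hdom
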